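/- The language {a^m b^(n+1) a^(m+1) b^n : m, n ≥ 1} over {a,b} is not context-free; consequently the shuffle of the context-free languages {a^n b a^n : n ≥ 1} and {b^n a b^n : n ≥ 1} is not context-free. -/

import Mathlib

/-- `Shuffle u v w` means `w` is an interleaving (shuffle) of `u` and `v`. -/
inductive Shuffle {α : Type*} : List α → List α → List α → Prop
  | nil : Shuffle [] [] []
  | left {a : α} {u v w : List α} : Shuffle u v w → Shuffle (a :: u) v (a :: w)
  | right {a : α} {u v w : List α} : Shuffle u v w → Shuffle u (a :: v) (a :: w)

/-- The two-letter alphabet {a, b}. -/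
inductive AB : Type
  | a : AB
  | b : AB

/-- The shuffle of two languages. -/
def LShuffle {α : Type*} (L₁ L₂ : Language α) : Language α :=
  {w | ∃ u ∈ L₁, ∃ v ∈ L₂, Shuffle u v w}
/-!
A size-minimal parse tree of a long word is tall, so a longest path has two nodes with the same
label within its bottom `|rules| + 1` levels. Cutting out or repeating the part of the tree between
them pumps the word, and minimality forces that part to have a nonempty yield.

Pumping `a^q b^(q+1) a^(q+1) b^q` down inside a window of length at most `q` only touches two
adjacent blocks, so it leaves a word `a^A b^B a^C b^D` which keeps two of the original block
lengths; together with `C = A + 1` and `B = D + 1` this forces nothing to have been removed. Both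
languages satisfy these relations on such words: in a shuffle of `a^n b a^n` and `b^m a b^m`
into `a^A b^B a^C b^D`, the lone `b` of the first word sits in the first `b`-block and the lone
`a` of the second word in the second `a`-block.
-/

namespace List

variable {α : Type*}

lemma replicate_append_cons_inj {c d : α} (hcd : c ≠ d) :
    ∀ {i j : ℕ} {l l' : List α}, replicate i c ++ d :: l = replicate j c ++ d :: l' →
      i = j ∧ l = l'
  | 0, 0, _, _, h => ⟨rfl, by simpa using h⟩
  | 0, j + 1, _, _, h => absurd (cons.inj h).1.symm hcd
  | i + 1, 0, _, _, h => absurd (cons.inj h).1 hcd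
  | i + 1, j + 1, _, _, h => by
    obtain ⟨rfl, rfl⟩ := replicate_append_cons_inj hcd (cons.inj h).2
    exact ⟨rfl, rfl⟩

lemma exists_eq_append_of_append_eq_append {l₁ l₂ m₁ m₂ : List α} (h : l₁ ++ l₂ = m₁ ++ m₂)
    (hl : l₁.length ≤ m₁.length) : ∃ k, m₁ = l₁ ++ k ∧ l₂ = k ++ m₂ := by
  rcases append_eq_append_iff.mp h with h' | ⟨k, rfl, rfl⟩
  · exact h'
  · obtain rfl : k = [] := by simpa using hl
    exact ⟨[], by simp, rfl⟩

lemma exists_sublist_of_append_eq {l m r u v x y z : List α}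
    (h : l ++ m ++ r = u ++ v ++ x ++ y ++ z) (hl : l.length ≤ u.length)
    (hr : u.length + (v ++ x ++ y).length ≤ l.length + m.length) :
    ∃ m', m' <+ m ∧ m'.length + (v ++ y).length = m.length ∧ u ++ x ++ z = l ++ m' ++ r := by
  obtain ⟨k₁, rfl, h₁⟩ := exists_eq_append_of_append_eq_append
    (l₂ := m ++ r) (m₂ := v ++ x ++ y ++ z) (by simpa [append_assoc] using h) hl
  obtain ⟨k₂, rfl, rfl⟩ := exists_eq_append_of_append_eq_append
    (l₁ := k₁ ++ (v ++ x ++ y)) (m₂ := r) (by simpa [append_assoc] using h₁.symm)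
    (by simp only [length_append] at hr ⊢; omega)
  refine ⟨k₁ ++ x ++ k₂, ?_, by simp; omega, by simp⟩
  exact ((Sublist.refl k₁).append (infix_append v x y).sublist).append (Sublist.refl k₂)

lemma exists_replicate_of_append_eq {l r u v x y z : List α} {c d : α} {P Q : ℕ}
    (h : l ++ (replicate P c ++ replicate Q d) ++ r = u ++ v ++ x ++ y ++ z)
    (hl : l.length ≤ u.length) (hr : u.length + (v ++ x ++ y).length ≤ l.length + (P + Q)) :
    ∃ P' Q', P' + Q' + (v ++ y).length = P + Q ∧
      u ++ x ++ z = l ++ (replicate P' c ++ replicate Q' d) ++ r := by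
  obtain ⟨m, hm, hlen, heq⟩ := exists_sublist_of_append_eq h hl (by simpa using hr)
  obtain ⟨m₁, m₂, rfl, h₁, h₂⟩ := sublist_append_iff.mp hm
  obtain ⟨P', -, rfl⟩ := sublist_replicate_iff.mp h₁
  obtain ⟨Q', -, rfl⟩ := sublist_replicate_iff.mp h₂
  exact ⟨P', Q', by simpa [Nat.add_assoc] using hlen, heq⟩

end List

namespace Shuffle

variable {α : Type*} {u v w : List α}

lemma sublist_left (h : Shuffle u v w) : u.Sublist w := by
  induction h with
  | nil => exact .slnil
  | left _ ih => exact ih.cons_cons _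
  | right _ ih => exact ih.cons _

lemma sublist_right (h : Shuffle u v w) : v.Sublist w := by
  induction h with
  | nil => exact .slnil
  | left _ ih => exact ih.cons _
  | right _ ih => exact ih.cons_cons _

lemma length_add (h : Shuffle u v w) : u.length + v.length = w.length := by
  induction h with
  | nil => rfl
  | left _ ih => simp [← ih]; omega
  | right _ ih => simp [← ih]; omega

lemma nil_right : ∀ l : List α, Shuffle l [] l
  | [] => .nil
  | _ :: l => .left (nil_right l)

lemma nil_left : ∀ l : List α, Shuffle [] l l
  | [] => .nil
  | _ :: l => .right (nil_left l)

lemma append {u' v' w' : List α} (h : Shuffle u v w) (h' : Shuffle u' v' w') :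
    Shuffle (u ++ u') (v ++ v') (w ++ w') := by
  induction h with
  | nil => exact h'
  | left _ ih => exact .left ih
  | right _ ih => exact .right ih

lemma exists_of_append : ∀ {u v w₁ w₂ : List α}, Shuffle u v (w₁ ++ w₂) →
    ∃ u₁ u₂ v₁ v₂, u = u₁ ++ u₂ ∧ v = v₁ ++ v₂ ∧ Shuffle u₁ v₁ w₁ ∧ Shuffle u₂ v₂ w₂
  | _, _, [], _, h => ⟨[], _, [], _, rfl, rfl, .nil, h⟩
  | _, _, _ :: _, _, .left h => by
    obtain ⟨u₁, u₂, v₁, v₂, rfl, rfl, h₁, h₂⟩ := exists_of_append h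
    exact ⟨_ :: u₁, u₂, v₁, v₂, rfl, rfl, .left h₁, h₂⟩
  | _, _, _ :: _, _, .right h => by
    obtain ⟨u₁, u₂, v₁, v₂, rfl, rfl, h₁, h₂⟩ := exists_of_append h
    exact ⟨u₁, u₂, _ :: v₁, v₂, rfl, rfl, .right h₁, h₂⟩

lemma exists_of_replicate {n : ℕ} {c : α} (h : Shuffle u v (List.replicate n c)) :
    ∃ i j, i + j = n ∧ u = List.replicate i c ∧ v = List.replicate j c := by
  obtain ⟨i, -, rfl⟩ := List.sublist_replicate_iff.mp h.sublist_left
  obtain ⟨j, -, rfl⟩ := List.sublist_replicate_iff.mp h.sublist_right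
  exact ⟨i, j, by simpa using h.length_add, rfl, rfl⟩

end Shuffle

universe u

namespace ContextFreeGrammar

variable {T : Type u} {g : ContextFreeGrammar T}

/-- One parse tree for each symbol of `s`; a parse tree rooted at `A` is a forest for
`[.nonterminal A]`. -/
inductive ParseForest (g : ContextFreeGrammar T) : List (Symbol T g.NT) → Type u
  | nil : ParseForest g []
  | terminal (t : T) {s : List (Symbol T g.NT)} (f : ParseForest g s) :
      ParseForest g (.terminal t :: s)
  | node {A : g.NT} (r : ContextFreeRule T g.NT) (hr : r ∈ g.rules) (hA : r.input = A)
      {s : List (Symbol T g.NT)} (c : ParseForest g r.output) (f : ParseForest g s) :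
      ParseForest g (.nonterminal A :: s)

namespace ParseForest

def yield : {s : List (Symbol T g.NT)} → g.ParseForest s → List T
  | _, nil => []
  | _, terminal t f => t :: f.yield
  | _, node _ _ _ c f => c.yield ++ f.yield

def size : {s : List (Symbol T g.NT)} → g.ParseForest s → ℕ
  | _, nil => 0
  | _, terminal _ f => f.size + 1
  | _, node _ _ _ c f => c.size + f.size + 1

def height : {s : List (Symbol T g.NT)} → g.ParseForest s → ℕ
  | _, nil => 0
  | _, terminal _ f => f.height
  | _, node _ _ _ c f => max (c.height + 1) f.height

def append : {s s' : List (Symbol T g.NT)} → g.ParseForest s → g.ParseForest s' →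
    g.ParseForest (s ++ s')
  | _, _, nil, f' => f'
  | _, _, terminal t f, f' => terminal t (f.append f')
  | _, _, node r hr hA c f, f' => node r hr hA c (f.append f')

def ofTerminals : (w : List T) → g.ParseForest (w.map .terminal)
  | [] => nil
  | t :: w => terminal t (ofTerminals w)

@[simp] lemma yield_nil : (nil : g.ParseForest []).yield = [] := rfl

@[simp] lemma yield_terminal (t : T) {s} (f : g.ParseForest s) :
    (terminal t f).yield = t :: f.yield := rfl

@[simp] lemma yield_node {A : g.NT} (r : ContextFreeRule T g.NT) (hr hA) {s}
    (c : g.ParseForest r.output) (f : g.ParseForest s) :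
    (node (A := A) r hr hA c f).yield = c.yield ++ f.yield := rfl

@[simp] lemma size_nil : (nil : g.ParseForest []).size = 0 := rfl

@[simp] lemma size_terminal (t : T) {s} (f : g.ParseForest s) :
    (terminal t f).size = f.size + 1 := rfl

@[simp] lemma size_node {A : g.NT} (r : ContextFreeRule T g.NT) (hr hA) {s}
    (c : g.ParseForest r.output) (f : g.ParseForest s) :
    (node (A := A) r hr hA c f).size = c.size + f.size + 1 := rfl

@[simp] lemma height_nil : (nil : g.ParseForest []).height = 0 := rfl

@[simp] lemma height_terminal (t : T) {s} (f : g.ParseForest s) :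
    (terminal t f).height = f.height := rfl

@[simp] lemma height_node {A : g.NT} (r : ContextFreeRule T g.NT) (hr hA) {s}
    (c : g.ParseForest r.output) (f : g.ParseForest s) :
    (node (A := A) r hr hA c f).height = max (c.height + 1) f.height := rfl

@[simp] lemma yield_append : ∀ {s s'} (f : g.ParseForest s) (f' : g.ParseForest s'),
    (f.append f').yield = f.yield ++ f'.yield
  | _, _, nil, _ => rfl
  | _, _, terminal t f, f' => by simp [append, yield_append f f']
  | _, _, node r hr hA c f, f' => by simp [append, yield_append f f']

@[simp] lemma size_append : ∀ {s s'} (f : g.ParseForest s) (f' : g.ParseForest s'),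
    (f.append f').size = f.size + f'.size
  | _, _, nil, _ => by simp [append]
  | _, _, terminal t f, f' => by simp [append, size_append f f']; omega
  | _, _, node r hr hA c f, f' => by simp [append, size_append f f']; omega

@[simp] lemma yield_ofTerminals : ∀ w : List T, (ofTerminals (g := g) w).yield = w
  | [] => rfl
  | t :: w => by simp [ofTerminals, yield_ofTerminals w]

lemma exists_split : ∀ (s : List (Symbol T g.NT)) {s'} (f : g.ParseForest (s ++ s')),
    ∃ (f₁ : g.ParseForest s) (f₂ : g.ParseForest s'), f.yield = f₁.yield ++ f₂.yield
  | [], _, f => ⟨nil, f, rfl⟩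
  | .terminal t :: s, _, terminal _ f => by
      obtain ⟨f₁, f₂, h⟩ := exists_split s f
      exact ⟨terminal t f₁, f₂, by simp [h]⟩
  | .nonterminal _ :: s, _, node r hr hA c f => by
      obtain ⟨f₁, f₂, h⟩ := exists_split s f
      exact ⟨node r hr hA c f₁, f₂, by simp [h]⟩

lemma derives_yield : ∀ {s} (f : g.ParseForest s), g.Derives s (f.yield.map .terminal)
  | _, nil => Derives.refl _
  | _, terminal t f => by simpa using (derives_yield f).append_left [.terminal t]
  | _, node r hr rfl c f => .head ⟨r, hr, .head _⟩ <| by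
      simpa using ((derives_yield c).append_right _).trans ((derives_yield f).append_left _)

lemma exists_of_derives {s : List (Symbol T g.NT)} {w : List T}
    (h : g.Derives s (w.map .terminal)) : ∃ f : g.ParseForest s, f.yield = w := by
  induction h using Relation.ReflTransGen.head_induction_on with
  | refl => exact ⟨ofTerminals w, yield_ofTerminals w⟩
  | head hstep _ ih =>
    obtain ⟨r, hr, hrw⟩ := hstep
    obtain ⟨p, q, rfl, rfl⟩ := hrw.exists_parts
    rw [List.append_assoc] at ih ⊢
    obtain ⟨f, rfl⟩ := ih
    obtain ⟨fp, f', hf⟩ := exists_split p f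
    obtain ⟨fr, fq, hf'⟩ := exists_split r.output f'
    exact ⟨fp.append ((node r hr rfl fr nil).append fq), by simp [hf, hf']⟩

lemma length_yield_le {k : ℕ} (hk : ∀ r ∈ g.rules, r.output.length ≤ k) (hk₁ : 1 ≤ k) :
    ∀ {s} (f : g.ParseForest s), f.yield.length ≤ s.length * k ^ f.height
  | _, nil => by simp
  | _, terminal t f => by
      have := length_yield_le hk hk₁ f
      have := Nat.one_le_pow f.height k hk₁
      simp only [yield_terminal, List.length_cons, height_terminal]
      nlinarith
  | _, node r hr _ c f => by
      have hc : c.yield.length ≤ k ^ (c.height + 1) := calc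
        _ ≤ r.output.length * k ^ c.height := length_yield_le hk hk₁ c
        _ ≤ k * k ^ c.height := Nat.mul_le_mul_right _ (hk r hr)
        _ = k ^ (c.height + 1) := by ring
      have hf := length_yield_le hk hk₁ f
      have hc' := Nat.pow_le_pow_right hk₁ (le_max_left (c.height + 1) f.height)
      have hf' := Nat.pow_le_pow_right hk₁ (le_max_right (c.height + 1) f.height)
      simp only [yield_node, List.length_append, List.length_cons, height_node]
      nlinarith

lemma length_yield_le_pow {k : ℕ} (hk : ∀ r ∈ g.rules, r.output.length ≤ k) (hk₁ : 1 ≤ k)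
    {A : g.NT} (t : g.ParseForest [.nonterminal A]) : t.yield.length ≤ k ^ t.height := by
  simpa using length_yield_le hk hk₁ t

lemma exists_rule {A : g.NT} (t : g.ParseForest [.nonterminal A]) :
    ∃ r ∈ g.rules, r.input = A := by
  cases t with
  | node r hr hA c f => exact ⟨r, hr, hA⟩

lemma length_le_card_rules {V : List g.NT} (hV : V.Nodup)
    (h : ∀ B ∈ V, Nonempty (g.ParseForest [.nonterminal B])) : V.length ≤ g.rules.card := by
  classical
  rw [← List.toFinset_card_of_nodup hV]
  refine le_trans (Finset.card_le_card fun B hB => ?_) (Finset.card_image_le (f := (·.input)))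
  obtain ⟨t⟩ := h B (List.mem_toFinset.mp hB)
  obtain ⟨r, hr, rfl⟩ := t.exists_rule
  exact Finset.mem_image_of_mem _ hr

end ParseForest

lemma mem_language_iff_exists_parseForest {w : List T} :
    w ∈ g.language ↔ ∃ t : g.ParseForest [.nonterminal g.initial], t.yield = w :=
  ⟨ParseForest.exists_of_derives, fun ⟨t, ht⟩ => ht ▸ t.derives_yield⟩

lemma exists_parseForest_size_minimal {w : List T} (hw : w ∈ g.language) :
    ∃ t : g.ParseForest [.nonterminal g.initial], t.yield = w ∧
      ∀ t' : g.ParseForest [.nonterminal g.initial], t'.yield = w → t.size ≤ t'.size := by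
  classical
  have hex : ∃ n, ∃ t : g.ParseForest [.nonterminal g.initial], t.yield = w ∧ t.size = n :=
    (mem_language_iff_exists_parseForest.mp hw).elim fun t ht => ⟨_, t, ht, rfl⟩
  obtain ⟨t, ht, hsize⟩ := Nat.find_spec hex
  exact ⟨t, ht, fun t' ht' => hsize ▸ Nat.find_min' hex ⟨t', ht', rfl⟩⟩

/-- A parse forest for `s` with a hole for a parse tree rooted at `B`. -/
structure ParseContext (g : ContextFreeGrammar T) (s : List (Symbol T g.NT)) (B : g.NT) where
  plug : g.ParseForest [.nonterminal B] → g.ParseForest s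
  left : List T
  right : List T
  size : ℕ
  yield_plug (t : g.ParseForest [.nonterminal B]) : (plug t).yield = left ++ t.yield ++ right
  size_plug (t : g.ParseForest [.nonterminal B]) : (plug t).size = size + t.size

namespace ParseContext

attribute [simp] yield_plug size_plug

def id (B : g.NT) : g.ParseContext [.nonterminal B] B where
  plug t := t
  left := []
  right := []
  size := 0
  yield_plug _ := by simp
  size_plug _ := by simp

def comp {s : List (Symbol T g.NT)} {B B' : g.NT} (C : g.ParseContext s B)
    (D : g.ParseContext [.nonterminal B] B') : g.ParseContext s B' where
  plug t := C.plug (D.plug t)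
  left := C.left ++ D.left
  right := D.right ++ C.right
  size := C.size + D.size
  yield_plug _ := by simp
  size_plug _ := by simp; omega

def terminal (t : T) {s : List (Symbol T g.NT)} {B : g.NT} (C : g.ParseContext s B) :
    g.ParseContext (.terminal t :: s) B where
  plug x := .terminal t (C.plug x)
  left := t :: C.left
  right := C.right
  size := C.size + 1
  yield_plug _ := by simp
  size_plug _ := by simp; omega

def head {B : g.NT} {s : List (Symbol T g.NT)} (f : g.ParseForest s) :
    g.ParseContext (.nonterminal B :: s) B where
  plug x := x.append f
  left := []
  right := f.yield
  size := f.size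
  yield_plug _ := by simp
  size_plug _ := by simp; omega

def tail {A B : g.NT} (r : ContextFreeRule T g.NT) (hr : r ∈ g.rules) (hA : r.input = A)
    (c : g.ParseForest r.output) {s : List (Symbol T g.NT)} (C : g.ParseContext s B) :
    g.ParseContext (.nonterminal A :: s) B where
  plug x := .node r hr hA c (C.plug x)
  left := c.yield ++ C.left
  right := C.right
  size := c.size + C.size + 1
  yield_plug _ := by simp
  size_plug _ := by simp; omega

def child {A B : g.NT} (r : ContextFreeRule T g.NT) (hr : r ∈ g.rules) (hA : r.input = A)
    (C : g.ParseContext r.output B) : g.ParseContext [.nonterminal A] B where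
  plug x := .node r hr hA (C.plug x) .nil
  left := C.left
  right := C.right
  size := C.size + 1
  yield_plug _ := by simp
  size_plug _ := by simp; omega

lemma yield_iterate_plug {B : g.NT} (C : g.ParseContext [.nonterminal B] B)
    (t : g.ParseForest [.nonterminal B]) (i : ℕ) :
    (C.plug^[i] t).yield =
      (List.replicate i C.left).flatten ++ t.yield ++ (List.replicate i C.right).flatten := by
  induction i with
  | zero => simp
  | succ i ih =>
    rw [Function.iterate_succ_apply', yield_plug, ih, List.replicate_succ, List.replicate_succ']
    simp

end ParseContext

namespace ParseForest

lemma exists_tallest_tree : ∀ {s} (f : g.ParseForest s), 1 ≤ f.height →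
    ∃ (B : g.NT) (t : g.ParseForest [.nonterminal B]) (C : g.ParseContext s B),
      f = C.plug t ∧ t.height = f.height
  | _, nil, h => by simp at h
  | _, terminal t f, h => by
      obtain ⟨B, t', C, rfl, ht'⟩ := exists_tallest_tree f h
      exact ⟨B, t', C.terminal t, rfl, ht'⟩
  | _, node r hr hA c f, h => by
      by_cases hcf : f.height ≤ c.height + 1
      · exact ⟨_, node r hr hA c nil, .head f, rfl, by simp; omega⟩
      · obtain ⟨B, t', C, rfl, ht'⟩ := exists_tallest_tree f (by omega)
        exact ⟨B, t', .tail r hr hA c C, rfl, by simp; omega⟩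

lemma exists_tallest_child {A : g.NT} (t : g.ParseForest [.nonterminal A]) (ht : 2 ≤ t.height) :
    ∃ (B : g.NT) (t' : g.ParseForest [.nonterminal B]) (C : g.ParseContext [.nonterminal A] B),
      0 < C.size ∧ t = C.plug t' ∧ t'.height + 1 = t.height := by
  cases t with
  | node r hr hA c f =>
    cases f
    simp only [height_node, height_nil] at ht
    obtain ⟨B, t', C, rfl, ht'⟩ := exists_tallest_tree c (by omega)
    exact ⟨B, t', .child r hr hA C, by simp [ParseContext.child], rfl, by simp; omega⟩

/-- `t` has a subtree of height at most `h` rooted at some `B` which properly contains another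
subtree rooted at `B`. -/
def IsPumpable {A : g.NT} (t : g.ParseForest [.nonterminal A]) (h : ℕ) : Prop :=
  ∃ (B : g.NT) (C₁ : g.ParseContext [.nonterminal A] B) (C₂ : g.ParseContext [.nonterminal B] B)
    (t' : g.ParseForest [.nonterminal B]),
    0 < C₂.size ∧ (C₂.plug t').height ≤ h ∧ t = C₁.plug (C₂.plug t')

/-- `V` lists the distinct labels met along a tallest path. -/
lemma isPumpable_or_exists_nodup_labels :
    ∀ (n : ℕ) {A : g.NT} (t : g.ParseForest [.nonterminal A]), t.height = n + 1 →
      t.IsPumpable (g.rules.card + 1) ∨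
        ∃ V : List g.NT, V.Nodup ∧ V.length = n + 1 ∧ ∀ B ∈ V,
          ∃ (C : g.ParseContext [.nonterminal A] B) (t' : g.ParseForest [.nonterminal B]),
            t = C.plug t'
  | 0, A, t, _ => .inr ⟨[A], List.nodup_singleton A, rfl, by simpa using ⟨.id A, t, rfl⟩⟩
  | n + 1, A, t, ht => by
    obtain ⟨B, s, D, hD, rfl, hs⟩ := exists_tallest_child t (by omega)
    rcases isPumpable_or_exists_nodup_labels n s (by omega) with
      ⟨B', C₁, C₂, t', hC₂, hheight, rfl⟩ | ⟨V, hV, hlen, hsub⟩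
    · exact .inl ⟨B', D.comp C₁, C₂, t', hC₂, hheight, rfl⟩
    by_cases hA : A ∈ V
    · obtain ⟨E, t', rfl⟩ := hsub A hA
      have := length_le_card_rules hV fun B hB => (hsub B hB).elim fun _ ⟨t'', _⟩ => ⟨t''⟩
      exact .inl ⟨A, .id A, D.comp E, t', by simp [ParseContext.comp]; omega,
        by simp [ParseContext.comp]; omega, rfl⟩
    · refine .inr ⟨A :: V, List.nodup_cons.mpr ⟨hA, hV⟩, by simp [hlen], ?_⟩
      rintro B' (_ | ⟨_, hB'⟩)
      · exact ⟨.id A, _, rfl⟩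
      · obtain ⟨E, t', rfl⟩ := hsub B' hB'
        exact ⟨D.comp E, t', rfl⟩

lemma isPumpable_of_card_rules_lt_height {A : g.NT} (t : g.ParseForest [.nonterminal A])
    (h : g.rules.card < t.height) : t.IsPumpable (g.rules.card + 1) := by
  obtain ⟨n, hn⟩ : ∃ n, t.height = n + 1 := ⟨t.height - 1, by omega⟩
  refine (isPumpable_or_exists_nodup_labels n t hn).resolve_right ?_
  rintro ⟨V, hV, hlen, hsub⟩
  have := length_le_card_rules hV fun B hB => (hsub B hB).elim fun _ ⟨t', _⟩ => ⟨t'⟩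
  omega

end ParseForest

end ContextFreeGrammar

open ContextFreeGrammar in
theorem Language.IsContextFree.exists_pumping_length {T : Type*} {L : Language T}
    (hL : L.IsContextFree) :
    ∃ p, ∀ w ∈ L, p ≤ w.length → ∃ u v x y z : List T,
      w = u ++ v ++ x ++ y ++ z ∧ v ++ y ≠ [] ∧ (v ++ x ++ y).length ≤ p ∧
      ∀ i, u ++ (List.replicate i v).flatten ++ x ++ (List.replicate i y).flatten ++ z ∈ L := by
  obtain ⟨g, rfl⟩ := hL
  set k := max 2 (g.rules.sup fun r => r.output.length)
  have hk : ∀ r ∈ g.rules, r.output.length ≤ k :=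
    fun r hr => le_max_of_le_right (Finset.le_sup (f := fun r => r.output.length) hr)
  have hk₁ : 1 ≤ k := le_max_of_le_left one_le_two
  refine ⟨k ^ (g.rules.card + 1), fun w hw hlen => ?_⟩
  obtain ⟨t, rfl, hmin⟩ := exists_parseForest_size_minimal hw
  have hheight : g.rules.card < t.height :=
    (Nat.pow_le_pow_iff_right (le_max_left 2 _)).mp (hlen.trans (t.length_yield_le_pow hk hk₁))
  obtain ⟨B, C₁, C₂, t', hC₂, hh, rfl⟩ := t.isPumpable_of_card_rules_lt_height hheight
  refine ⟨C₁.left, C₂.left, t'.yield, C₂.right, C₁.right, by simp, ?_, ?_, fun i => ?_⟩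
  · intro hvy
    obtain ⟨hl, hr⟩ := List.append_eq_nil_iff.mp hvy
    have := hmin (C₁.plug t') (by simp [hl, hr])
    simp only [ParseContext.size_plug] at this
    omega
  · calc (C₂.left ++ t'.yield ++ C₂.right).length = (C₂.plug t').yield.length := by simp
      _ ≤ k ^ (C₂.plug t').height := (C₂.plug t').length_yield_le_pow hk hk₁
      _ ≤ k ^ (g.rules.card + 1) := Nat.pow_le_pow_right hk₁ hh
  · refine mem_language_iff_exists_parseForest.mpr ⟨C₁.plug (C₂.plug^[i] t'), ?_⟩
    simp [ParseContext.yield_iterate_plug]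

instance : DecidableEq AB
  | .a, .a => isTrue rfl
  | .a, .b => isFalse AB.noConfusion
  | .b, .a => isFalse AB.noConfusion
  | .b, .b => isTrue rfl

namespace AB

open List

def abab (A B C D : ℕ) : List AB := replicate A a ++ replicate B b ++ replicate C a ++ replicate D b

@[simp] lemma length_abab (A B C D : ℕ) : (abab A B C D).length = A + B + C + D := by
  simp [abab, Nat.add_assoc]

@[simp] lemma count_a_abab (A B C D : ℕ) : (abab A B C D).count a = A + C := by
  simp [abab, count_replicate]

@[simp] lemma count_b_abab (A B C D : ℕ) : (abab A B C D).count b = B + D := by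
  simp [abab, count_replicate]

lemma abab_inj {A B C D A' B' C' D' : ℕ} (h : abab A B C D = abab A' B' C' D')
    (hB' : 1 ≤ B') (hC' : 1 ≤ C') : A = A' ∧ B = B' ∧ C = C' ∧ D = D' := by
  have hca := congrArg (count a) h
  have hcb := congrArg (count b) h
  simp only [count_a_abab, count_b_abab] at hca hcb
  obtain ⟨B₀', rfl⟩ : ∃ n, B' = n + 1 := ⟨B' - 1, by omega⟩
  obtain ⟨C₀', rfl⟩ : ∃ n, C' = n + 1 := ⟨C' - 1, by omega⟩
  have hrhs : abab A' (B₀' + 1) (C₀' + 1) D' =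
      replicate A' a ++ b :: (replicate B₀' b ++ a :: (replicate C₀' a ++ replicate D' b)) := by
    simp [abab, replicate_succ]
  rw [hrhs] at h
  obtain ⟨B₀, rfl⟩ | rfl : (∃ n, B = n + 1) ∨ B = 0 := by cases B <;> simp
  · have hlhs : abab A (B₀ + 1) C D =
        replicate A a ++ b :: (replicate B₀ b ++ replicate C a ++ replicate D b) := by
      simp [abab, replicate_succ]
    rw [hlhs] at h
    obtain ⟨rfl, htail⟩ := replicate_append_cons_inj (by decide) h
    obtain ⟨C₀, rfl⟩ | rfl : (∃ n, C = n + 1) ∨ C = 0 := by cases C <;> simp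
    · simp only [replicate_succ, append_assoc, cons_append] at htail
      obtain ⟨rfl, -⟩ := replicate_append_cons_inj (by decide) htail
      omega
    · have := congrArg (count a) htail
      simp [count_replicate] at this
  · exfalso
    obtain ⟨D₀, rfl⟩ : ∃ n, D = n + 1 := ⟨D - 1, by omega⟩
    have hlhs : abab A 0 C (D₀ + 1) = replicate (A + C) a ++ b :: replicate D₀ b := by
      simp only [abab, replicate_zero, append_nil, replicate_append_replicate, replicate_succ]
    rw [hlhs] at h
    have := congrArg (count a) (replicate_append_cons_inj (by decide) h).2
    simp [count_replicate] at this

/-- The window `v ++ x ++ y` is too short to meet both `a`-blocks or both `b`-blocks. -/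
lemma exists_abab_of_pump {q : ℕ} {u v x y z : List AB}
    (h : abab q (q + 1) (q + 1) q = u ++ v ++ x ++ y ++ z) (hlen : (v ++ x ++ y).length ≤ q) :
    ∃ A B C D, u ++ x ++ z = abab A B C D ∧ A + B + C + D + (v ++ y).length = 4 * q + 2 ∧
      (C = q + 1 ∧ D = q ∨ A = q ∧ D = q ∨ A = q ∧ B = q + 1) := by
  have htotal := congrArg length h
  have hvxy : (v ++ x ++ y).length = v.length + x.length + y.length := by simp; omega
  simp only [length_abab, length_append] at htotal
  by_cases h₁ : u.length + (v ++ x ++ y).length ≤ 2 * q + 1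
  · obtain ⟨A, B, hAB, heq⟩ := exists_replicate_of_append_eq (l := [])
      (r := replicate (q + 1) a ++ replicate q b) (by simpa [abab] using h) (by simp)
      (by simp only [length_nil]; omega)
    exact ⟨A, B, q + 1, q, by simpa [abab] using heq, by omega, by omega⟩
  by_cases h₂ : u.length + (v ++ x ++ y).length ≤ 3 * q + 2
  · obtain ⟨B, C, hBC, heq⟩ := exists_replicate_of_append_eq (l := replicate q a)
      (r := replicate q b) (by simpa [abab] using h) (by simp; omega)
      (by simp only [length_replicate]; omega)
    exact ⟨q, B, C, q, by simpa [abab] using heq, by omega, by omega⟩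
  · obtain ⟨C, D, hCD, heq⟩ := exists_replicate_of_append_eq
      (l := replicate q a ++ replicate (q + 1) b) (r := []) (by simpa [abab] using h)
      (by simp; omega) (by simp only [length_append, length_replicate]; omega)
    exact ⟨q, q + 1, C, D, by simpa [abab] using heq, by omega, by omega⟩

theorem not_isContextFree_of_abab {L : Language AB}
    (hmem : ∀ q, 1 ≤ q → abab q (q + 1) (q + 1) q ∈ L)
    (hrel : ∀ A B C D, abab A B C D ∈ L → C = A + 1 ∧ B = D + 1) : ¬ L.IsContextFree := by
  intro hL
  obtain ⟨p, hp⟩ := hL.exists_pumping_length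
  obtain ⟨u, v, x, y, z, hw, hvy, hlen, hpump⟩ :=
    hp _ (hmem (p + 1) (by omega)) (by simp only [length_abab]; omega)
  obtain ⟨A, B, C, D, hxyz, hsum, hblocks⟩ := exists_abab_of_pump hw (by omega)
  have := hrel A B C D (hxyz ▸ by simpa using hpump 0)
  have := length_pos_iff.mpr hvy
  omega

lemma exists_abab_of_shuffle {u v : List AB} {A B C D : ℕ} (h : Shuffle u v (abab A B C D)) :
    ∃ i₁ i₂ i₃ i₄ j₁ j₂ j₃ j₄, u = abab i₁ i₂ i₃ i₄ ∧ v = abab j₁ j₂ j₃ j₄ ∧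
      i₁ + j₁ = A ∧ i₂ + j₂ = B ∧ i₃ + j₃ = C ∧ i₄ + j₄ = D := by
  obtain ⟨u₁, u₄, v₁, v₄, rfl, rfl, h, h₄⟩ := h.exists_of_append
  obtain ⟨u₁, u₃, v₁, v₃, rfl, rfl, h, h₃⟩ := h.exists_of_append
  obtain ⟨u₁, u₂, v₁, v₂, rfl, rfl, h₁, h₂⟩ := h.exists_of_append
  obtain ⟨i₁, j₁, rfl, rfl, rfl⟩ := h₁.exists_of_replicate
  obtain ⟨i₂, j₂, rfl, rfl, rfl⟩ := h₂.exists_of_replicate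
  obtain ⟨i₃, j₃, rfl, rfl, rfl⟩ := h₃.exists_of_replicate
  obtain ⟨i₄, j₄, rfl, rfl, rfl⟩ := h₄.exists_of_replicate
  exact ⟨i₁, i₂, i₃, i₄, j₁, j₂, j₃, j₄, rfl, rfl, rfl, rfl, rfl, rfl⟩

lemma eq_add_one_of_shuffle {A B C D n m : ℕ} (hn : 1 ≤ n) (hm : 1 ≤ m)
    (h : Shuffle (replicate n a ++ [b] ++ replicate n a) (replicate m b ++ [a] ++ replicate m b)
      (abab A B C D)) : C = A + 1 ∧ B = D + 1 := by
  obtain ⟨i₁, i₂, i₃, i₄, j₁, j₂, j₃, j₄, hu, hv, rfl, rfl, rfl, rfl⟩ := exists_abab_of_shuffle h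
  obtain ⟨rfl, rfl, rfl, rfl⟩ :=
    abab_inj (B' := 1) (C' := n) (D' := 0) (by simpa [abab] using hu.symm) le_rfl hn
  obtain ⟨rfl, rfl, rfl, rfl⟩ :=
    abab_inj (A' := 0) (C' := 1) (by simpa [abab] using hv.symm) hm le_rfl
  omega

lemma shuffle_abab (q : ℕ) :
    Shuffle (replicate q a ++ [b] ++ replicate q a) (replicate q b ++ [a] ++ replicate q b)
      (abab q (q + 1) (q + 1) q) := by
  have h := (((Shuffle.nil_right (replicate q a)).append
      (Shuffle.left (a := b) (Shuffle.nil_left (replicate q b)))).append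
    ((Shuffle.nil_right (replicate q a)).append (Shuffle.nil_left [a]))).append
      (Shuffle.nil_left (replicate q b))
  rw [abab, replicate_succ (n := q) (a := b), replicate_succ' (n := q) (a := a)]
  simpa using h

end AB

/-- {a^m b^(n+1) a^(m+1) b^n : m, n ≥ 1} is not context-free; consequently the shuffle of
{a^n b a^n : n ≥ 1} and {b^n a b^n : n ≥ 1} is not context-free. -/
theorem stmt_5 :
    ¬ Language.IsContextFree
      ({w | ∃ m n : ℕ, 1 ≤ m ∧ 1 ≤ n ∧
          w = List.replicate m AB.a ++ List.replicate (n + 1) AB.b ++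
              List.replicate (m + 1) AB.a ++ List.replicate n AB.b} : Language AB) ∧
    ¬ Language.IsContextFree
      (LShuffle
        ({w | ∃ n : ℕ, 1 ≤ n ∧
            w = List.replicate n AB.a ++ [AB.b] ++ List.replicate n AB.a} : Language AB)
        ({w | ∃ n : ℕ, 1 ≤ n ∧
            w = List.replicate n AB.b ++ [AB.a] ++ List.replicate n AB.b} : Language AB)) := by
  constructor
  · refine AB.not_isContextFree_of_abab (fun q hq => ⟨q, q, hq, hq, rfl⟩) ?_
    rintro A B C D ⟨m, n, -, -, h⟩
    obtain ⟨rfl, rfl, rfl, rfl⟩ := AB.abab_inj h (by omega) (by omega)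
    omega
  · refine AB.not_isContextFree_of_abab
      (fun q hq => ⟨_, ⟨q, hq, rfl⟩, _, ⟨q, hq, rfl⟩, AB.shuffle_abab q⟩) ?_
    rintro A B C D ⟨_, ⟨n, hn, rfl⟩, _, ⟨m, hm, rfl⟩, h⟩
    exact AB.eq_add_one_of_shuffle hn hm h
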